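/- Let p be a prime and 𝒞 ⊆ (ℤ/p)^{2n} a linear code. For every τ in the upper half-plane, the lattice theta function of the Construction A lattice Λ(𝒞) equals the complete weight enumerator of 𝒞 evaluated on the functions ψ⁺_{ab}: Θ_{Λ(𝒞)}(τ) = W_𝒞({ψ⁺_{ab}(τ)}), where ψ⁺_{ab}(τ) := Σ_{k₁,k₂∈ℤ} q^{(p/4)((ã+b̃)/p + k₁ + k₂)²} q̄^{(p/4)((ã−b̃)/p + k₁ − k₂)²} and ã, b̃ ∈ {0,…,p−1} are the integer lifts of a, b ∈ ℤ/p. -/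

import Mathlib

noncomputable section
open scoped BigOperators

/-- The Lorentzian inner product `x ⊙ y = Σᵢ (xᵢ y_{n+i} + x_{n+i} yᵢ)` on `ℝ^{2n}`,
with coordinates indexed by `Fin n ⊕ Fin n` (metric `η = [[0,Iₙ],[Iₙ,0]]`). -/
def lorR {n : ℕ} (x y : Fin n ⊕ Fin n → ℝ) : ℝ :=
  ∑ i : Fin n, (x (Sum.inl i) * y (Sum.inr i) + x (Sum.inr i) * y (Sum.inl i))

/-- The Lorentzian inner product on `(ℤ/p)^{2n}`. -/
def lorZmod {n p : ℕ} (x y : Fin n ⊕ Fin n → ZMod p) : ZMod p :=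
  ∑ i : Fin n, (x (Sum.inl i) * y (Sum.inr i) + x (Sum.inr i) * y (Sum.inl i))

/-- The componentwise lift of a codeword in `(ℤ/p)^{2n}` to `{0,…,p−1}^{2n} ⊆ ℝ^{2n}`. -/
def liftR {n p : ℕ} (c : Fin n ⊕ Fin n → ZMod p) : Fin n ⊕ Fin n → ℝ :=
  fun i => ((c i).val : ℝ)

/-- The Construction A lattice `Λ(𝒞) = {(c̃ + p·m)/√p : c ∈ 𝒞, m ∈ ℤ^{2n}} ⊆ ℝ^{2n}`. -/
def constrA {n : ℕ} (p : ℕ) (C : Set (Fin n ⊕ Fin n → ZMod p)) : Set (Fin n ⊕ Fin n → ℝ) :=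
  {x | ∃ c ∈ C, ∃ m : Fin n ⊕ Fin n → ℤ, x = fun i => (liftR c i + p * m i) / Real.sqrt p}

/-- The dual `L* = {x : x ⊙ l ∈ ℤ for all l ∈ L}` with respect to the Lorentzian
inner product. -/
def dualLor {n : ℕ} (L : Set (Fin n ⊕ Fin n → ℝ)) : Set (Fin n ⊕ Fin n → ℝ) :=
  {x | ∀ l ∈ L, ∃ k : ℤ, lorR x l = (k : ℝ)}

/-- `q^x := e^{2πiτx}` for real `x`. -/
def qpow (τ : ℂ) (x : ℝ) : ℂ := Complex.exp (2 * Real.pi * Complex.I * τ * x)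

/-- `q̄^x := e^{−2πi·conj(τ)·x}` for real `x`. -/
def qbarpow (τ : ℂ) (x : ℝ) : ℂ :=
  Complex.exp (-(2 * Real.pi * Complex.I) * (starRingEnd ℂ τ) * x)

/-- The theta function `Θ_S(τ) = Σ_{λ∈S} q^{|λ₁+λ₂|²/4} q̄^{|λ₁−λ₂|²/4}` of a subset
`S ⊆ ℝ^{2n}`, where `λ = (λ₁, λ₂)`. -/
def thetaSet {n : ℕ} (S : Set (Fin n ⊕ Fin n → ℝ)) (τ : ℂ) : ℂ :=
  ∑' l : S,
    qpow τ ((∑ i : Fin n, (l.1 (Sum.inl i) + l.1 (Sum.inr i)) ^ 2) / 4) *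
      qbarpow τ ((∑ i : Fin n, (l.1 (Sum.inl i) - l.1 (Sum.inr i)) ^ 2) / 4)

/-- The complete weight enumerator `W_𝒞({x_{ab}}) = Σ_{(α,β)∈𝒞} Πᵢ x_{αᵢβᵢ}` of a code
`𝒞 ⊆ (ℤ/p)^{2n}`, evaluated on a family of complex numbers `x`. -/
def cwe {n p : ℕ} (C : Set (Fin n ⊕ Fin n → ZMod p)) (x : ZMod p → ZMod p → ℂ) : ℂ :=
  ∑' c : C, ∏ i : Fin n, x (c.1 (Sum.inl i)) (c.1 (Sum.inr i))

/-- The theta function `Θ_{m,k}(τ) = Σ_{n∈ℤ} q^{k(n+m/(2k))²}`. -/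
def thetaMK (m : ℤ) (k : ℕ) (τ : ℂ) : ℂ :=
  ∑' j : ℤ, qpow τ ((k : ℝ) * ((j : ℝ) + (m : ℝ) / (2 * (k : ℝ))) ^ 2)

/-- The conjugate theta function `Θ̄_{m,k}(τ) = Σ_{n∈ℤ} q̄^{k(n+m/(2k))²}`. -/
def thetaMKbar (m : ℤ) (k : ℕ) (τ : ℂ) : ℂ :=
  ∑' j : ℤ, qbarpow τ ((k : ℝ) * ((j : ℝ) + (m : ℝ) / (2 * (k : ℝ))) ^ 2)

/-- `ψ⁺_{ab}(τ) = Σ_{k₁,k₂∈ℤ} q^{(p/4)((ã+b̃)/p+k₁+k₂)²} q̄^{(p/4)((ã−b̃)/p+k₁−k₂)²}`, with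
`ã, b̃ ∈ {0,…,p−1}` the integer lifts of `a, b ∈ ℤ/p`. -/
def psiPlus {p : ℕ} (a b : ZMod p) (τ : ℂ) : ℂ :=
  ∑' k : ℤ × ℤ,
    qpow τ (((p : ℝ) / 4) * (((a.val : ℝ) + (b.val : ℝ)) / p + (k.1 : ℝ) + (k.2 : ℝ)) ^ 2) *
      qbarpow τ (((p : ℝ) / 4) * (((a.val : ℝ) - (b.val : ℝ)) / p + (k.1 : ℝ) - (k.2 : ℝ)) ^ 2)

/-! ### Auxiliary lemmas -/

open Complex in
lemma norm_qpow (τ : ℂ) (x : ℝ) : ‖qpow τ x‖ = Real.exp (-(2 * Real.pi * τ.im * x)) := by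
  rw [qpow, Complex.norm_exp]
  have h : (2 * (Real.pi : ℂ) * Complex.I * τ * (x : ℝ)) =
      ((2 * Real.pi * x : ℝ) : ℂ) * (τ * Complex.I) := by push_cast; ring
  rw [h, Complex.re_ofReal_mul, Complex.mul_I_re]
  ring_nf

open Complex in
lemma norm_qbarpow (τ : ℂ) (x : ℝ) : ‖qbarpow τ x‖ = Real.exp (-(2 * Real.pi * τ.im * x)) := by
  rw [qbarpow, Complex.norm_exp]
  have h : (-(2 * (Real.pi : ℂ) * Complex.I) * (starRingEnd ℂ τ) * (x : ℝ)) =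
      ((-(2 * Real.pi * x) : ℝ) : ℂ) * ((starRingEnd ℂ τ) * Complex.I) := by push_cast; ring
  rw [h, Complex.re_ofReal_mul, Complex.mul_I_re, Complex.conj_im]
  ring_nf

lemma qpow_zero (τ : ℂ) : qpow τ 0 = 1 := by
  simp [qpow]

lemma qbarpow_zero (τ : ℂ) : qbarpow τ 0 = 1 := by
  simp [qbarpow]

lemma qpow_add (τ : ℂ) (x y : ℝ) : qpow τ (x + y) = qpow τ x * qpow τ y := by
  rw [qpow, qpow, qpow, ← Complex.exp_add]
  congr 1
  push_cast
  ring

lemma qbarpow_add (τ : ℂ) (x y : ℝ) : qbarpow τ (x + y) = qbarpow τ x * qbarpow τ y := by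
  rw [qbarpow, qbarpow, qbarpow, ← Complex.exp_add]
  congr 1
  push_cast
  ring

lemma qpow_sum {ι : Type*} (s : Finset ι) (τ : ℂ) (a : ι → ℝ) :
    qpow τ (∑ i ∈ s, a i) = ∏ i ∈ s, qpow τ (a i) := by
  classical
  induction s using Finset.induction_on with
  | empty => simp [qpow_zero]
  | insert _ _ h ih => rw [Finset.sum_insert h, Finset.prod_insert h, qpow_add, ih]

lemma qbarpow_sum {ι : Type*} (s : Finset ι) (τ : ℂ) (a : ι → ℝ) :
    qbarpow τ (∑ i ∈ s, a i) = ∏ i ∈ s, qbarpow τ (a i) := by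
  classical
  induction s using Finset.induction_on with
  | empty => simp [qbarpow_zero]
  | insert _ _ h ih => rw [Finset.sum_insert h, Finset.prod_insert h, qbarpow_add, ih]

/-- Summability of shifted discrete Gaussians. -/
lemma summable_gauss {t : ℝ} (ht : 0 < t) (α : ℝ) :
    Summable fun k : ℤ => Real.exp (-(t * ((k : ℝ) + α) ^ 2)) := by
  have hπ : (0 : ℝ) < Real.pi := Real.pi_pos
  have hsum : Summable fun k : ℤ =>
      jacobiTheta₂_term k (((t * α / Real.pi : ℝ) : ℂ) * Complex.I)
        (((t / Real.pi : ℝ) : ℂ) * Complex.I) := by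
    rw [summable_jacobiTheta₂_term_iff]
    simp only [Complex.mul_I_im, Complex.ofReal_re]
    positivity
  have hnorm := hsum.norm
  have h2 := hnorm.mul_left (Real.exp (-(t * α ^ 2)))
  refine h2.congr fun k => ?_
  rw [norm_jacobiTheta₂_term]
  simp only [Complex.mul_I_im, Complex.ofReal_re]
  rw [← Real.exp_add]
  congr 1
  field_simp
  ring

/-- The summand of `psiPlus`. -/
def gterm {p : ℕ} (τ : ℂ) (a b : ZMod p) (k : ℤ × ℤ) : ℂ :=
  qpow τ (((p : ℝ) / 4) * (((a.val : ℝ) + (b.val : ℝ)) / p + (k.1 : ℝ) + (k.2 : ℝ)) ^ 2) *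
    qbarpow τ (((p : ℝ) / 4) * (((a.val : ℝ) - (b.val : ℝ)) / p + (k.1 : ℝ) - (k.2 : ℝ)) ^ 2)

lemma psiPlus_eq_tsum_gterm {p : ℕ} (a b : ZMod p) (τ : ℂ) :
    psiPlus a b τ = ∑' k : ℤ × ℤ, gterm τ a b k := rfl

lemma norm_gterm {p : ℕ} (hp : 0 < p) (τ : ℂ) (a b : ZMod p) (k : ℤ × ℤ) :
    ‖gterm τ a b k‖ =
      Real.exp (-(Real.pi * p * τ.im * ((k.1 : ℝ) + (a.val : ℝ) / p) ^ 2)) *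
        Real.exp (-(Real.pi * p * τ.im * ((k.2 : ℝ) + (b.val : ℝ) / p) ^ 2)) := by
  have hpR : ((p : ℝ)) ≠ 0 := by positivity
  rw [gterm, norm_mul, norm_qpow, norm_qbarpow, ← Real.exp_add, ← Real.exp_add]
  congr 1
  field_simp
  ring

lemma summable_norm_gterm {p : ℕ} (hp : 0 < p) {τ : ℂ} (hτ : 0 < τ.im) (a b : ZMod p) :
    Summable fun k : ℤ × ℤ => ‖gterm τ a b k‖ := by
  have hc : (0 : ℝ) < Real.pi * p * τ.im := by
    have := Real.pi_pos
    have : (0:ℝ) < p := by exact_mod_cast hp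
    positivity
  have h1 := summable_gauss hc ((a.val : ℝ) / p)
  have h2 := summable_gauss hc ((b.val : ℝ) / p)
  refine (Summable.mul_of_nonneg
      (f := fun k : ℤ => Real.exp (-(Real.pi * p * τ.im * ((k : ℝ) + (a.val : ℝ) / p) ^ 2)))
      (g := fun k : ℤ => Real.exp (-(Real.pi * p * τ.im * ((k : ℝ) + (b.val : ℝ) / p) ^ 2)))
      h1 h2 (fun _ => (Real.exp_pos _).le) fun _ => (Real.exp_pos _).le).congr
    fun k => ?_
  exact (norm_gterm hp τ a b k).symm

/-- Product/tsum exchange over a finite product of index types. -/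
lemma pi_tsum_prod {β : Type*} :
    ∀ (N : ℕ) (f : Fin N → β → ℂ), (∀ i, Summable fun b => ‖f i b‖) →
      Summable (fun v : Fin N → β => ‖∏ i, f i (v i)‖) ∧
        (∑' v : Fin N → β, ∏ i, f i (v i)) = ∏ i, ∑' b, f i b := by
  intro N
  induction N with
  | zero =>
    intro f _
    haveI : Unique (Fin 0 → β) := ⟨⟨fun i => i.elim0⟩, fun v => funext fun i => i.elim0⟩
    constructor
    · exact Summable.of_finite
    · simp [tsum_const]
  | succ N ih =>
    intro f hf
    obtain ⟨ihS, ihE⟩ := ih (fun i => f i.succ) fun i => hf i.succ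
    have hS0 := hf 0
    have hkey : ∀ y : β × (Fin N → β),
        (∏ i, f i (Fin.consEquiv (fun _ => β) y i)) =
          f 0 y.1 * ∏ i : Fin N, f i.succ (y.2 i) := by
      intro y
      simp only [Fin.consEquiv, Equiv.coe_fn_mk]
      rw [Fin.prod_univ_succ, Fin.cons_zero]
      exact congrArg _ (Finset.prod_congr rfl fun i _ => by rw [Fin.cons_succ])
    have hcomp : Summable fun y : β × (Fin N → β) =>
        ‖f 0 y.1‖ * ‖∏ i : Fin N, f i.succ (y.2 i)‖ :=
      Summable.mul_of_nonneg (f := fun b => ‖f 0 b‖)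
        (g := fun v : Fin N → β => ‖∏ i : Fin N, f i.succ (v i)‖)
        hS0 ihS (fun _ => norm_nonneg _) fun _ => norm_nonneg _
    have hsum2 : Summable
        ((fun v : Fin (N + 1) → β => ‖∏ i, f i (v i)‖) ∘ (Fin.consEquiv fun _ => β)) :=
      hcomp.congr fun y => by rw [Function.comp_apply, hkey y, norm_mul]
    refine ⟨(Fin.consEquiv fun _ => β).summable_iff.mp hsum2, ?_⟩
    calc
      (∑' v : Fin (N + 1) → β, ∏ i, f i (v i))
          = ∑' y : β × (Fin N → β), ∏ i, f i (Fin.consEquiv (fun _ => β) y i) :=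
            ((Fin.consEquiv fun _ => β).tsum_eq _).symm
      _ = ∑' y : β × (Fin N → β), f 0 y.1 * ∏ i : Fin N, f i.succ (y.2 i) :=
            tsum_congr fun y => hkey y
      _ = (∑' x : β, f 0 x) * ∑' w : Fin N → β, ∏ i : Fin N, f i.succ (w i) :=
            (tsum_mul_tsum_of_summable_norm hS0 ihS).symm
      _ = ∏ i, ∑' b, f i b := by rw [ihE, Fin.prod_univ_succ]

/-- `(Fin n → ℤ × ℤ) ≃ (Fin n ⊕ Fin n → ℤ)`. -/
def sumPairEquiv (n : ℕ) : (Fin n → ℤ × ℤ) ≃ (Fin n ⊕ Fin n → ℤ) where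
  toFun v := Sum.elim (fun i => (v i).1) (fun i => (v i).2)
  invFun m i := (m (Sum.inl i), m (Sum.inr i))
  left_inv v := rfl
  right_inv m := funext fun x => by cases x <;> rfl

/-- Let `p` be a prime and `𝒞 ⊆ (ℤ/p)^{2n}` a linear code. For every `τ` in the upper
half-plane, the lattice theta function of the Construction A lattice `Λ(𝒞)` equals the
complete weight enumerator of `𝒞` evaluated on the functions `ψ⁺_{ab}`. -/
theorem statement12 {n p : ℕ} (hn : 1 ≤ n) (hp : p.Prime)
    (C : Submodule (ZMod p) (Fin n ⊕ Fin n → ZMod p))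
    (τ : ℂ) (hτ : 0 < τ.im) :
    thetaSet (constrA p (C : Set (Fin n ⊕ Fin n → ZMod p))) τ =
      cwe (C : Set (Fin n ⊕ Fin n → ZMod p)) (fun a b => psiPlus a b τ) := by
  classical
  have hp0 : 0 < p := hp.pos
  have hpR : (0 : ℝ) < p := by exact_mod_cast hp0
  have hpR' : (p : ℝ) ≠ 0 := ne_of_gt hpR
  have hsq : Real.sqrt p ≠ 0 := ne_of_gt (Real.sqrt_pos.mpr hpR)
  haveI : NeZero p := ⟨hp0.ne'⟩
  set CS := (C : Set (Fin n ⊕ Fin n → ZMod p)) with hCS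
  set X := (Fin n ⊕ Fin n → ℤ) with hX
  -- the parametrization map
  have hmem : ∀ y : CS × X,
      (fun i => (liftR y.1.1 i + p * y.2 i) / Real.sqrt p) ∈ constrA p CS :=
    fun y => ⟨y.1.1, y.1.2, y.2, rfl⟩
  have hbij : Function.Bijective
      (fun y : CS × X =>
        (⟨fun i => (liftR y.1.1 i + p * y.2 i) / Real.sqrt p, hmem y⟩ :
          constrA p CS)) := by
    constructor
    · rintro ⟨⟨c, hc⟩, m⟩ ⟨⟨c', hc'⟩, m'⟩ h
      have h' : ∀ i, (liftR c i + p * m i) / Real.sqrt p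
          = (liftR c' i + p * m' i) / Real.sqrt p := fun i =>
        congrFun (congrArg Subtype.val h) i
      have hZ : ∀ i, ((c i).val : ℤ) + p * m i = ((c' i).val : ℤ) + p * m' i := by
        intro i
        have h2 := h' i
        rw [div_eq_div_iff hsq hsq] at h2
        have h3 : liftR c i + p * m i = liftR c' i + p * m' i :=
          mul_right_cancel₀ hsq h2
        simp only [liftR] at h3
        exact_mod_cast h3
      have hc2 : ∀ i, c i = c' i := by
        intro i
        have h4 := congrArg (fun z : ℤ => (z : ZMod p)) (hZ i)
        push_cast at h4
        simpa [ZMod.natCast_self, ZMod.natCast_val, ZMod.cast_id] using h4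
      have hm : ∀ i, m i = m' i := by
        intro i
        have h5 := hZ i
        rw [show ((c i).val : ℤ) = ((c' i).val : ℤ) by rw [hc2 i]] at h5
        have h6 : (p : ℤ) * m i = (p : ℤ) * m' i := by omega
        exact mul_left_cancel₀ (by exact_mod_cast hp0.ne') h6
      simp only [Prod.mk.injEq, Subtype.mk.injEq]
      exact ⟨funext hc2, funext hm⟩
    · rintro ⟨x, c, hc, m, rfl⟩
      exact ⟨(⟨c, hc⟩, m), rfl⟩
  let e : CS × X ≃ (constrA p CS) := Equiv.ofBijective _ hbij
  -- per-point computation of the theta summand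
  have hterm : ∀ y : CS × X,
      qpow τ ((∑ i : Fin n, ((e y).1 (Sum.inl i) + (e y).1 (Sum.inr i)) ^ 2) / 4) *
        qbarpow τ ((∑ i : Fin n, ((e y).1 (Sum.inl i) - (e y).1 (Sum.inr i)) ^ 2) / 4)
      = ∏ i : Fin n, gterm τ (y.1.1 (Sum.inl i)) (y.1.1 (Sum.inr i))
          (y.2 (Sum.inl i), y.2 (Sum.inr i)) := by
    intro y
    have key : ∀ (u v : ℝ) (k1 k2 : ℤ),
        ((u + p * k1) / Real.sqrt p + (v + p * k2) / Real.sqrt p) ^ 2 / 4 =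
          ((p : ℝ) / 4) * ((u + v) / p + (k1 : ℝ) + (k2 : ℝ)) ^ 2 := by
      intro u v k1 k2
      rw [← add_div, div_pow, Real.sq_sqrt hpR.le]
      field_simp
      ring
    have key2 : ∀ (u v : ℝ) (k1 k2 : ℤ),
        ((u + p * k1) / Real.sqrt p - (v + p * k2) / Real.sqrt p) ^ 2 / 4 =
          ((p : ℝ) / 4) * ((u - v) / p + (k1 : ℝ) - (k2 : ℝ)) ^ 2 := by
      intro u v k1 k2
      rw [div_sub_div_same, div_pow, Real.sq_sqrt hpR.le]
      field_simp
      ring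
    have he : (e y).1 = fun i => (liftR y.1.1 i + p * y.2 i) / Real.sqrt p := rfl
    rw [he]
    rw [Finset.sum_div, Finset.sum_div, qpow_sum, qbarpow_sum, ← Finset.prod_mul_distrib]
    refine Finset.prod_congr rfl fun i _ => ?_
    simp only [gterm, liftR]
    rw [key ((y.1.1 (Sum.inl i)).val : ℝ) ((y.1.1 (Sum.inr i)).val : ℝ)
      (y.2 (Sum.inl i)) (y.2 (Sum.inr i)),
      key2 ((y.1.1 (Sum.inl i)).val : ℝ) ((y.1.1 (Sum.inr i)).val : ℝ)
      (y.2 (Sum.inl i)) (y.2 (Sum.inr i))]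
  -- inner summability and evaluation, for each codeword
  have hpi : ∀ c : CS,
      Summable (fun v : Fin n → ℤ × ℤ =>
        ‖∏ i : Fin n, gterm τ (c.1 (Sum.inl i)) (c.1 (Sum.inr i)) (v i)‖) ∧
      (∑' v : Fin n → ℤ × ℤ, ∏ i : Fin n,
          gterm τ (c.1 (Sum.inl i)) (c.1 (Sum.inr i)) (v i)) =
        ∏ i : Fin n, ∑' k : ℤ × ℤ, gterm τ (c.1 (Sum.inl i)) (c.1 (Sum.inr i)) k :=
    fun c => pi_tsum_prod n (fun i => gterm τ (c.1 (Sum.inl i)) (c.1 (Sum.inr i)))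
      (fun i => summable_norm_gterm hp0 hτ _ _)
  have hinner_sum : ∀ c : CS, Summable fun m : X =>
      ‖∏ i : Fin n, gterm τ (c.1 (Sum.inl i)) (c.1 (Sum.inr i))
        (m (Sum.inl i), m (Sum.inr i))‖ := by
    intro c
    refine ((sumPairEquiv n).summable_iff).mp ?_
    exact ((hpi c).1).congr fun v => rfl
  have hinner_eq : ∀ c : CS,
      (∑' m : X, ∏ i : Fin n, gterm τ (c.1 (Sum.inl i)) (c.1 (Sum.inr i))
        (m (Sum.inl i), m (Sum.inr i))) =
      ∏ i : Fin n, psiPlus (c.1 (Sum.inl i)) (c.1 (Sum.inr i)) τ := by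
    intro c
    rw [← Equiv.tsum_eq (sumPairEquiv n)]
    exact (hpi c).2
  haveI : Finite CS := Subtype.finite
  have hGnorm : Summable fun y : CS × X =>
      ‖∏ i : Fin n, gterm τ (y.1.1 (Sum.inl i)) (y.1.1 (Sum.inr i))
        (y.2 (Sum.inl i), y.2 (Sum.inr i))‖ := by
    refine (summable_prod_of_nonneg fun y => norm_nonneg _).mpr ⟨fun c => hinner_sum c, ?_⟩
    exact Summable.of_finite
  have hG : Summable fun y : CS × X =>
      ∏ i : Fin n, gterm τ (y.1.1 (Sum.inl i)) (y.1.1 (Sum.inr i))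
        (y.2 (Sum.inl i), y.2 (Sum.inr i)) := hGnorm.of_norm
  calc
    thetaSet (constrA p CS) τ
        = ∑' y : CS × X,
            (qpow τ ((∑ i : Fin n, ((e y).1 (Sum.inl i) + (e y).1 (Sum.inr i)) ^ 2) / 4) *
              qbarpow τ
                ((∑ i : Fin n, ((e y).1 (Sum.inl i) - (e y).1 (Sum.inr i)) ^ 2) / 4)) := by
          rw [thetaSet, ← Equiv.tsum_eq e]
    _ = ∑' y : CS × X, ∏ i : Fin n,
          gterm τ (y.1.1 (Sum.inl i)) (y.1.1 (Sum.inr i))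
            (y.2 (Sum.inl i), y.2 (Sum.inr i)) := tsum_congr hterm
    _ = ∑' c : CS, ∑' m : X, ∏ i : Fin n,
          gterm τ (c.1 (Sum.inl i)) (c.1 (Sum.inr i))
            (m (Sum.inl i), m (Sum.inr i)) :=
          Summable.tsum_prod' hG fun c => ((hinner_sum c).of_norm)
    _ = ∑' c : CS, ∏ i : Fin n, psiPlus (c.1 (Sum.inl i)) (c.1 (Sum.inr i)) τ :=
          tsum_congr fun c => hinner_eq c
    _ = cwe CS (fun a b => psiPlus a b τ) := rfl
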